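/- arXiv:2603.12369 — 3 statements merged into one kernel-verified Lean document; each statement's English description precedes it below -/
import Mathlib

section
/- Let $X_1,\dots,X_{n+1}$ be exchangeable real-valued random variables (nonconformity scores). For a miscoverage level $\alpha \in (0,1)$, let $q$ be the $\lceil (n+1)(1-\alpha) \rceil$-th smallest value among $X_1,\dots,X_n$. Then $\Pr(X_{n+1} \le q) \ge 1-\alpha$. -/
open MeasureTheory ProbabilityTheory
open scoped ENNReal

/-- The `k`-th smallest element of a multiset of reals (1-indexed). -/
noncomputable def kthSmallest (s : Multiset ℝ) (k : ℕ) : ℝ :=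
  (s.sort (· ≤ ·)).getD (k - 1) 0

-- sorted list: kth element ≤ t iff at least k elements ≤ t
lemma sorted_le_iff (l : List ℝ) (hl : l.Pairwise (· ≤ ·)) (k : ℕ) (h1 : 1 ≤ k)
    (h2 : k ≤ l.length) (t : ℝ) :
    l.getD (k - 1) 0 ≤ t ↔ k ≤ (l.filter (fun x => x ≤ t)).length := by
  have hkl : k - 1 < l.length := by omega
  rw [List.getD_eq_getElem l 0 hkl]
  have hmono : ∀ i j (hi : i < l.length) (hj : j < l.length), i ≤ j → l[i] ≤ l[j] := by
    intro i j hi hj hij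
    rcases eq_or_lt_of_le hij with rfl | h
    · exact le_refl _
    · exact List.pairwise_iff_getElem.mp hl i j hi hj h
  constructor
  · intro h
    have hsplit : l = l.take k ++ l.drop k := (List.take_append_drop k l).symm
    have htake : (l.take k).filter (fun x => x ≤ t) = l.take k := by
      rw [List.filter_eq_self]
      intro x hx
      rw [List.mem_take_iff_getElem] at hx
      obtain ⟨i, hi, rfl⟩ := hx
      simp only [decide_eq_true_eq]
      have : l[i] ≤ l[k-1] := hmono i (k-1) (by omega) hkl (by omega)
      exact le_trans this h
    calc k = (l.take k).length := by rw [List.length_take]; omega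
    _ = ((l.take k).filter (fun x => x ≤ t)).length := by rw [htake]
    _ ≤ (l.filter (fun x => x ≤ t)).length := by
        conv_rhs => rw [hsplit]
        rw [List.filter_append, List.length_append]; omega
  · intro h
    by_contra hgt
    push_neg at hgt
    have hdrop : (l.drop (k-1)).filter (fun x => x ≤ t) = [] := by
      rw [List.filter_eq_nil_iff]
      intro x hx
      rw [List.mem_drop_iff_getElem] at hx
      obtain ⟨i, hi, rfl⟩ := hx
      simp only [decide_eq_true_eq, not_le]
      have : l[k-1] ≤ l[(k-1)+i] := hmono (k-1) ((k-1)+i) hkl (by omega) (by omega)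
      linarith
    have hsplit : l = l.take (k-1) ++ l.drop (k-1) := (List.take_append_drop _ l).symm
    have : (l.filter (fun x => x ≤ t)).length ≤ k - 1 := by
      conv_lhs => rw [hsplit]
      rw [List.filter_append, hdrop, List.length_append]
      have h3 := List.length_filter_le (fun x => decide (x ≤ t)) (l.take (k-1))
      rw [List.length_take] at h3
      simp only [List.length_nil]
      omega
    omega

lemma kthSmallest_le_iff (s : Multiset ℝ) (k : ℕ) (h1 : 1 ≤ k) (h2 : k ≤ Multiset.card s) (t : ℝ) :
    kthSmallest s k ≤ t ↔ k ≤ Multiset.card (s.filter (fun x => x ≤ t)) := by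
  have hperm : (s.sort (· ≤ ·) : Multiset ℝ) = s := s.sort_eq _
  rw [kthSmallest, sorted_le_iff _ (s.pairwise_sort _) k h1 (by rw [Multiset.length_sort]; exact h2)]
  constructor <;> intro h
  · rwa [← hperm, Multiset.filter_coe, Multiset.coe_card]
  · rwa [← hperm, Multiset.filter_coe, Multiset.coe_card] at h


lemma filter_le_kthSmallest (s : Multiset ℝ) (k : ℕ) (h1 : 1 ≤ k) (h2 : k ≤ Multiset.card s) :
    k ≤ Multiset.card (s.filter (fun x => x ≤ kthSmallest s k)) :=
  (kthSmallest_le_iff s k h1 h2 _).mp le_rfl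

lemma kthSmallest_cons_le (s : Multiset ℝ) (x : ℝ) (k : ℕ) (h1 : 1 ≤ k)
    (h2 : k ≤ Multiset.card s) :
    kthSmallest (x ::ₘ s) k ≤ kthSmallest s k := by
  rw [kthSmallest_le_iff _ k h1 (by simp; omega)]
  refine le_trans (filter_le_kthSmallest s k h1 h2) ?_
  rw [Multiset.filter_cons, Multiset.card_add]
  omega

lemma map_perm_univ {m : ℕ} (σ : Equiv.Perm (Fin m)) (v : Fin m → ℝ) :
    Multiset.map (fun i => v (σ i)) Finset.univ.val = Multiset.map v Finset.univ.val := by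
  have h : Multiset.map (fun i => v (σ i)) Finset.univ.val
      = Multiset.map v (Multiset.map σ Finset.univ.val) := by
    rw [Multiset.map_map]; rfl
  rw [h]
  congr 1
  have h2 := Finset.map_univ_equiv σ
  calc Multiset.map (⇑σ) Finset.univ.val = (Finset.univ.map σ.toEmbedding).val := by
        rw [Finset.map_val]; rfl
  _ = Finset.univ.val := by rw [h2]

lemma map_univ_succ {m : ℕ} (v : Fin (m + 1) → ℝ) :
    Multiset.map v Finset.univ.val
      = v (Fin.last m) ::ₘ Multiset.map (fun i : Fin m => v i.castSucc) Finset.univ.val := by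
  rw [Fin.univ_castSuccEmb, Finset.cons_val, Multiset.map_cons, Finset.map_val, Multiset.map_map]
  rfl

lemma card_filter_eq {m : ℕ} (v : Fin m → ℝ) (p : ℝ → Prop) [DecidablePred p] :
    Multiset.card ((Multiset.map v Finset.univ.val).filter p)
      = (Finset.univ.filter (fun i => p (v i))).card := by
  rw [← Multiset.countP_eq_card_filter, Multiset.countP_map,
    Finset.card_def, Finset.filter_val, ← Multiset.countP_eq_card_filter]

lemma measurable_kth {m k : ℕ} (h1 : 1 ≤ k) (h2 : k ≤ m) :
    Measurable (fun v : Fin m → ℝ => kthSmallest (Multiset.map v Finset.univ.val) k) := by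
  apply measurable_of_Iic
  intro t
  have hcard : ∀ v : Fin m → ℝ, Multiset.card (Multiset.map v Finset.univ.val) = m := by
    intro v; simp
  have hset : (fun v : Fin m → ℝ => kthSmallest (Multiset.map v Finset.univ.val) k) ⁻¹' Set.Iic t
      = ⋃ (S : Finset (Fin m)) (_ : S.card = k), ⋂ i ∈ S, {v : Fin m → ℝ | v i ≤ t} := by
    ext v
    simp only [Set.mem_preimage, Set.mem_Iic, Set.mem_iUnion, Set.mem_iInter, Set.mem_setOf_eq]
    rw [kthSmallest_le_iff _ k h1 (by rw [hcard]; exact h2), card_filter_eq]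
    constructor
    · intro h
      obtain ⟨S, hS, hScard⟩ := Finset.exists_subset_card_eq h
      exact ⟨S, hScard, fun i hi => (Finset.mem_filter.mp (hS hi)).2⟩
    · rintro ⟨S, hScard, hS⟩
      calc k = S.card := hScard.symm
      _ ≤ _ := Finset.card_le_card (fun i hi => Finset.mem_filter.mpr ⟨Finset.mem_univ i, hS i hi⟩)
  rw [hset]
  exact MeasurableSet.iUnion fun S => MeasurableSet.iUnion fun _ =>
    MeasurableSet.biInter S.countable_toSet fun i _ =>
      measurableSet_le (measurable_pi_apply i) measurable_const

/-- Split conformal prediction coverage guarantee: for exchangeable scores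
`X 0, …, X n`, the `⌈(n+1)(1-α)⌉`-th smallest of the first `n` scores covers
the last score with probability at least `1 - α`. -/
theorem conformal_coverage_lower
    {Ω : Type*} [MeasureSpace Ω] [IsProbabilityMeasure (ℙ : Measure Ω)]
    {n : ℕ} (X : Fin (n + 1) → Ω → ℝ) (hmeas : ∀ i, Measurable (X i))
    (hexch : ∀ σ : Equiv.Perm (Fin (n + 1)),
      Measure.map (fun ω => fun i => X (σ i) ω) ℙ
        = Measure.map (fun ω => fun i => X i ω) ℙ)
    (α : ℝ) (hα : α ∈ Set.Ioo (0 : ℝ) 1)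
    (hk : ⌈((n : ℝ) + 1) * (1 - α)⌉₊ ≤ n) :
    1 - α ≤ (ℙ {ω | X (Fin.last n) ω ≤
      kthSmallest (Multiset.map (fun i : Fin n => X i.castSucc ω) Finset.univ.val)
        ⌈((n : ℝ) + 1) * (1 - α)⌉₊}).toReal := by
  obtain ⟨hα0, hα1⟩ := hα
  set k := ⌈((n : ℝ) + 1) * (1 - α)⌉₊ with hkdef
  have hk1 : 1 ≤ k := by
    rw [hkdef, Nat.one_le_iff_ne_zero, ← Nat.pos_iff_ne_zero, Nat.ceil_pos]
    have : (0:ℝ) < (n:ℝ) + 1 := by positivity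
    nlinarith
  set F : (Fin (n + 1) → ℝ) → ℝ :=
    fun v => kthSmallest (Multiset.map v Finset.univ.val) k with hF
  have hFmeas : Measurable F := measurable_kth hk1 (by omega)
  set g : Ω → Fin (n + 1) → ℝ := fun ω i => X i ω with hg
  have hgmeas : Measurable g := measurable_pi_lambda _ (fun i => hmeas i)
  set μ := Measure.map g ℙ with hμ
  have hμprob : IsProbabilityMeasure μ := Measure.isProbabilityMeasure_map hgmeas.aemeasurable
  set A : Fin (n + 1) → Set (Fin (n + 1) → ℝ) := fun i => {v | v i ≤ F v} with hA
  have hAmeas : ∀ i, MeasurableSet (A i) :=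
    fun i => measurableSet_le (measurable_pi_apply i) hFmeas
  -- all A i have the same measure
  have hAeq : ∀ i, μ (A i) = μ (A (Fin.last n)) := by
    intro i
    have h1 := hexch (Equiv.swap i (Fin.last n))
    have hm2 : Measurable (fun ω => fun j => X (Equiv.swap i (Fin.last n) j) ω) :=
      measurable_pi_lambda _ (fun j => hmeas _)
    have e1 : μ (A i) = ℙ ((fun ω j => X (Equiv.swap i (Fin.last n) j) ω) ⁻¹' A i) := by
      rw [← h1, Measure.map_apply hm2 (hAmeas i)]
    have e2 : μ (A (Fin.last n)) = ℙ (g ⁻¹' A (Fin.last n)) :=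
      Measure.map_apply hgmeas (hAmeas _)
    rw [e1, e2]
    congr 1
    ext ω
    have hFinv : F (fun j => X (Equiv.swap i (Fin.last n) j) ω) = F (g ω) :=
      congrArg (fun s => kthSmallest s k) (map_perm_univ (Equiv.swap i (Fin.last n)) (g ω))
    simp only [Set.mem_preimage, hA, Set.mem_setOf_eq]
    rw [hFinv, Equiv.swap_apply_left]
  -- pointwise count bound
  have hcount : ∀ v : Fin (n + 1) → ℝ, (k : ℝ≥0∞) ≤ ∑ i : Fin (n + 1), (A i).indicator 1 v := by
    intro v
    have h1 : k ≤ (Finset.univ.filter (fun i => v i ≤ F v)).card := by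
      have h0 := filter_le_kthSmallest (Multiset.map v Finset.univ.val) k hk1 (by simp; omega)
      rw [card_filter_eq] at h0
      exact h0
    calc (k : ℝ≥0∞) ≤ ((Finset.univ.filter (fun i => v i ≤ F v)).card : ℝ≥0∞) := by
          exact_mod_cast h1
    _ = ∑ i : Fin (n + 1), (A i).indicator 1 v := by
        rw [Finset.card_filter]
        push_cast
        refine Finset.sum_congr rfl (fun i _ => ?_)
        by_cases h : v i ≤ F v <;> simp [hA, Set.indicator, h]
  -- integrate
  have hint : (k : ℝ≥0∞) ≤ ((n : ℝ≥0∞) + 1) * μ (A (Fin.last n)) := by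
    have heq : ∀ i, μ (A i) = ∫⁻ v, (A i).indicator 1 v ∂μ :=
      fun i => (lintegral_indicator_one (hAmeas i)).symm
    calc (k : ℝ≥0∞) = ∫⁻ _, (k : ℝ≥0∞) ∂μ := by simp
    _ ≤ ∫⁻ v, ∑ i : Fin (n + 1), (A i).indicator 1 v ∂μ := lintegral_mono hcount
    _ = ∑ i : Fin (n + 1), ∫⁻ v, (A i).indicator 1 v ∂μ :=
        lintegral_finset_sum _ (fun i _ => measurable_one.indicator (hAmeas i))
    _ = ∑ _i : Fin (n + 1), μ (A (Fin.last n)) :=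
        Finset.sum_congr rfl (fun i _ => by rw [← heq, hAeq])
    _ = ((n : ℝ≥0∞) + 1) * μ (A (Fin.last n)) := by
        rw [Finset.sum_const, Finset.card_univ, Fintype.card_fin, nsmul_eq_mul]
        push_cast
        ring
  have hμA : ENNReal.ofReal (1 - α) ≤ μ (A (Fin.last n)) := by
    rw [← ENNReal.mul_le_mul_iff_right (a := (n : ℝ≥0∞) + 1) (by simp) (by simp)]
    refine le_trans ?_ hint
    have h2 : ((n : ℝ) + 1) * (1 - α) ≤ (k : ℝ) := Nat.le_ceil _
    calc ((n : ℝ≥0∞) + 1) * ENNReal.ofReal (1 - α)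
        = ENNReal.ofReal (((n : ℝ) + 1) * (1 - α)) := by
          rw [ENNReal.ofReal_mul (by positivity)]
          congr 1
          rw [show ((n : ℝ) + 1) = ((n + 1 : ℕ) : ℝ) by push_cast; ring,
            ENNReal.ofReal_natCast]
          push_cast; ring
    _ ≤ ENNReal.ofReal (k : ℝ) := ENNReal.ofReal_le_ofReal h2
    _ = (k : ℝ≥0∞) := ENNReal.ofReal_natCast k
  -- relate to the target event
  have hsub : g ⁻¹' (A (Fin.last n)) ⊆ {ω | X (Fin.last n) ω ≤
      kthSmallest (Multiset.map (fun i : Fin n => X i.castSucc ω) Finset.univ.val) k} := by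
    intro ω hω
    simp only [Set.mem_preimage, hA, Set.mem_setOf_eq] at hω ⊢
    refine le_trans hω ?_
    show kthSmallest (Multiset.map (g ω) Finset.univ.val) k ≤ _
    rw [map_univ_succ (g ω)]
    exact kthSmallest_cons_le _ _ k hk1 (by simpa using hk)
  have hfinal : ENNReal.ofReal (1 - α) ≤ ℙ {ω | X (Fin.last n) ω ≤
      kthSmallest (Multiset.map (fun i : Fin n => X i.castSucc ω) Finset.univ.val) k} := by
    refine le_trans hμA ?_
    rw [hμ, Measure.map_apply hgmeas (hAmeas _)]
    exact measure_mono hsub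
  rw [← ENNReal.ofReal_le_iff_le_toReal (measure_ne_top _ _)]
  exact hfinal
end

section
/- Let $X_1,\dots,X_{n+1}$ be exchangeable real-valued random variables whose joint distribution is almost surely tie-free (all values distinct). With $q$ the $\lceil (n+1)(1-\alpha) \rceil$-th smallest of $X_1,\dots,X_n$, one has the upper bound $\Pr(X_{n+1} \le q) \le 1-\alpha + \frac{1}{n+1}$. -/
open MeasureTheory ProbabilityTheory
open scoped ENNReal NNReal

open Classical in
/-- rank of coordinate `j` among the values of `x`. -/
noncomputable def rankF (n : ℕ) (j : Fin (n+1)) (x : Fin (n+1) → ℝ) : ℕ :=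
  (Finset.univ.filter (fun i => x i ≤ x j)).card

open Classical in
lemma rankF_eq_sum (n : ℕ) (j : Fin (n+1)) (x : Fin (n+1) → ℝ) :
    rankF n j x = ∑ i : Fin (n+1), if x i ≤ x j then 1 else 0 := by
  rw [rankF, Finset.card_filter]

lemma measurable_rankF (n : ℕ) (j : Fin (n+1)) : Measurable (rankF n j) := by
  classical
  have : (rankF n j) = fun x => ∑ i : Fin (n+1), if x i ≤ x j then 1 else 0 := by
    funext x; exact rankF_eq_sum n j x
  rw [this]
  exact Finset.measurable_sum _ (fun i _ =>
    Measurable.ite (measurableSet_le (measurable_pi_apply i) (measurable_pi_apply j))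
      measurable_const measurable_const)

lemma rankF_lt_of_lt {n : ℕ} {x : Fin (n+1) → ℝ} {j j' : Fin (n+1)}
    (h : x j < x j') : rankF n j x < rankF n j' x := by
  classical
  apply Finset.card_lt_card
  constructor
  · intro i hi
    simp only [Finset.mem_filter, Finset.mem_univ, true_and] at hi ⊢
    exact hi.trans h.le
  · intro hsub
    have := hsub (by simp : j' ∈ Finset.univ.filter (fun i => x i ≤ x j'))
    simp only [Finset.mem_filter, Finset.mem_univ, true_and] at this
    exact absurd this (not_le.2 h)

lemma rankF_inj {n : ℕ} {x : Fin (n+1) → ℝ} (hx : Function.Injective x) :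
    Function.Injective (fun j => rankF n j x) := by
  intro a b hab
  by_contra hne
  rcases lt_or_gt_of_ne (fun h : x a = x b => hne (hx h)) with h | h
  · exact absurd hab (rankF_lt_of_lt h).ne
  · exact absurd hab.symm (rankF_lt_of_lt h).ne

lemma rankF_pos {n : ℕ} (j : Fin (n+1)) (x : Fin (n+1) → ℝ) : 1 ≤ rankF n j x := by
  classical
  have : j ∈ Finset.univ.filter (fun i => x i ≤ x j) := by simp
  exact Finset.card_pos.2 ⟨j, this⟩

lemma rankF_le {n : ℕ} (j : Fin (n+1)) (x : Fin (n+1) → ℝ) : rankF n j x ≤ n + 1 := by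
  classical
  calc rankF n j x ≤ (Finset.univ : Finset (Fin (n+1))).card := Finset.card_filter_le _ _
  _ = n + 1 := by simp

open Classical in
lemma card_rankF_le {n k : ℕ} {x : Fin (n+1) → ℝ} (hx : Function.Injective x)
    (hk : k ≤ n + 1) :
    (Finset.univ.filter (fun j => rankF n j x ≤ k)).card = k := by
  classical
  set ρ : Fin (n+1) → ℕ := fun j => rankF n j x with hρ
  have hinj : Function.Injective ρ := rankF_inj hx
  have himg : Finset.univ.image ρ = Finset.Icc 1 (n+1) := by
    apply Finset.eq_of_subset_of_card_le
    · intro m hm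
      simp only [Finset.mem_image] at hm
      obtain ⟨j, _, rfl⟩ := hm
      exact Finset.mem_Icc.2 ⟨rankF_pos j x, rankF_le j x⟩
    · rw [Finset.card_image_of_injective _ hinj]
      simp
  have h1 : (Finset.univ.filter (fun j => ρ j ≤ k)).card
      = ((Finset.univ.image ρ).filter (fun m => m ≤ k)).card := by
    rw [Finset.filter_image, Finset.card_image_of_injective _ hinj]
  rw [h1, himg]
  have : (Finset.Icc 1 (n+1)).filter (fun m => m ≤ k) = Finset.Icc 1 k := by
    ext m; simp only [Finset.mem_filter, Finset.mem_Icc]; omega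
  rw [this, Nat.card_Icc]; omega

lemma sorted_countP_lt (l : List ℝ) (hl : l.Pairwise (· ≤ ·)) {j : ℕ} (hj : j < l.length)
    {v : ℝ} (hv : v ≤ l.getD j 0) :
    l.countP (fun y => decide (y < v)) ≤ j := by
  classical
  have hget : l.getD j 0 = l.get ⟨j, hj⟩ := List.getD_eq_get (l := l) (d := 0) ⟨j, hj⟩
  have hsplit : l = l.take j ++ l.drop j := (List.take_append_drop j l).symm
  have hdrop : l.drop j = l.get ⟨j, hj⟩ :: l.drop (j+1) := by
    rw [List.drop_eq_getElem_cons hj]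
    rfl
  have hsorted_drop : (l.drop j).Pairwise (· ≤ ·) :=
    hl.sublist (List.drop_sublist j l)
  rw [hdrop] at hsorted_drop
  rw [List.pairwise_cons] at hsorted_drop
  have h0 : (l.drop j).countP (fun y => decide (y < v)) = 0 := by
    rw [hdrop, List.countP_cons]
    have h1 : (l.drop (j+1)).countP (fun y => decide (y < v)) = 0 := by
      rw [List.countP_eq_zero]
      intro b hb
      simp only [decide_eq_true_eq]
      exact not_lt.2 (le_trans (hv.trans (hget.le)) (hsorted_drop.1 b hb))
    rw [h1]
    simp only [decide_eq_true_eq]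
    have h2 : v ≤ l[j] := by rw [← List.getD_eq_getElem l 0 hj]; exact hv
    simp [not_lt.2 h2]
  calc l.countP (fun y => decide (y < v))
      = (l.take j ++ l.drop j).countP (fun y => decide (y < v)) := by rw [← hsplit]
    _ = (l.take j).countP _ + (l.drop j).countP _ := List.countP_append
    _ ≤ (l.take j).length + 0 := by rw [h0]; exact Nat.add_le_add List.countP_le_length le_rfl
    _ ≤ j := by rw [List.length_take]; omega

lemma rank_last_le {n : ℕ} {k : ℕ} (hk1 : 1 ≤ k) (hk : k ≤ n) (x : Fin (n+1) → ℝ)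
    (hx : Function.Injective x)
    (h : x (Fin.last n) ≤ kthSmallest
      (Multiset.map (fun i : Fin n => x i.castSucc) Finset.univ.val) k) :
    rankF n (Fin.last n) x ≤ k := by
  classical
  set v := x (Fin.last n) with hv
  set s : Multiset ℝ := Multiset.map (fun i : Fin n => x i.castSucc) Finset.univ.val with hs
  set l : List ℝ := s.sort (· ≤ ·) with hl
  have hlen : l.length = n := by
    rw [hl, Multiset.length_sort, hs, Multiset.card_map]
    simp
  have hj : k - 1 < l.length := by omega
  have hcount : l.countP (fun y => decide (y < v)) ≤ k - 1 :=
    sorted_countP_lt l (Multiset.pairwise_sort (s := s) (r := (· ≤ ·))) hj h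
  have hms : s.countP (fun y => y < v) ≤ k - 1 := by
    have := Multiset.sort_eq (s := s) (r := (· ≤ ·))
    rw [← this, Multiset.coe_countP]
    exact hcount
  have hcard : (Finset.univ.filter (fun i : Fin n => x i.castSucc < v)).card ≤ k - 1 := by
    have h2 : s.countP (fun y => y < v)
        = Multiset.card (Multiset.filter (fun i : Fin n => x i.castSucc < v) Finset.univ.val) := by
      rw [hs, Multiset.countP_map]
    rw [h2] at hms
    simpa [Finset.card, Finset.filter] using hms
  have hrank : rankF n (Fin.last n) x
      = (Finset.univ.filter (fun i : Fin n => x i.castSucc < v)).card + 1 := by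
    rw [rankF_eq_sum, Fin.sum_univ_castSucc]
    have hlast : (if x (Fin.last n) ≤ x (Fin.last n) then 1 else 0) = 1 := by simp
    rw [hlast, Finset.card_filter]
    congr 1
    apply Finset.sum_congr rfl
    intro i _
    have hne : x i.castSucc ≠ v := fun hEq => by
      have := hx hEq
      exact absurd this (Fin.castSucc_lt_last i).ne
    have : (x i.castSucc ≤ x (Fin.last n)) ↔ (x i.castSucc < v) := by
      rw [← hv]
      exact ⟨fun h' => lt_of_le_of_ne h' hne, fun h' => h'.le⟩
    simp only [this]
  omega

/-- Split conformal prediction upper coverage bound: for exchangeable,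
almost surely tie-free scores `X 0, …, X n`, the `⌈(n+1)(1-α)⌉`-th smallest of
the first `n` scores covers the last score with probability at most
`1 - α + 1/(n+1)`. -/
theorem conformal_coverage_upper
    {Ω : Type*} [MeasureSpace Ω] [IsProbabilityMeasure (ℙ : Measure Ω)]
    {n : ℕ} (X : Fin (n + 1) → Ω → ℝ) (hmeas : ∀ i, Measurable (X i))
    (hexch : ∀ σ : Equiv.Perm (Fin (n + 1)),
      Measure.map (fun ω => fun i => X (σ i) ω) ℙ
        = Measure.map (fun ω => fun i => X i ω) ℙ)
    (hties : ℙ {ω | Function.Injective (fun i => X i ω)} = 1)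
    (α : ℝ) (hα : α ∈ Set.Ioo (0 : ℝ) 1)
    (hk : ⌈((n : ℝ) + 1) * (1 - α)⌉₊ ≤ n) :
    (ℙ {ω | X (Fin.last n) ω ≤
      kthSmallest (Multiset.map (fun i : Fin n => X i.castSucc ω) Finset.univ.val)
        ⌈((n : ℝ) + 1) * (1 - α)⌉₊}).toReal ≤ 1 - α + 1 / ((n : ℝ) + 1) := by
  classical
  obtain ⟨hα0, hα1⟩ := hα
  set k := ⌈((n : ℝ) + 1) * (1 - α)⌉₊ with hkdef
  have hk1 : 1 ≤ k := by
    rw [hkdef]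
    exact Nat.one_le_iff_ne_zero.mpr (fun h => by
      have := Nat.ceil_eq_zero.mp h
      nlinarith)
  set Y : Ω → (Fin (n+1) → ℝ) := fun ω i => X i ω with hYdef
  have hY : Measurable Y := measurable_pi_lambda _ hmeas
  set S : Set (Fin (n+1) → ℝ) := {x | rankF n (Fin.last n) x ≤ k} with hSdef
  have hS : MeasurableSet S := measurable_rankF n (Fin.last n) measurableSet_Iic
  set B : Fin (n+1) → Set Ω := fun j => {ω | rankF n j (Y ω) ≤ k} with hBdef
  have hB : ∀ j, MeasurableSet (B j) := fun j =>
    ((measurable_rankF n j).comp hY) measurableSet_Iic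
  -- exchangeability: all B j have the same probability
  have hBeq : ∀ j, ℙ (B j) = ℙ (B (Fin.last n)) := by
    intro j
    set σ := Equiv.swap j (Fin.last n) with hσ
    have hmeasσ : Measurable (fun ω => fun i => X (σ i) ω) :=
      measurable_pi_lambda _ (fun i => hmeas (σ i))
    have h2 : Measure.map (fun ω => fun i => X (σ i) ω) ℙ S = Measure.map Y ℙ S := by
      rw [hexch σ]
    rw [Measure.map_apply hmeasσ hS, Measure.map_apply hY hS] at h2
    have h3 : (fun ω => fun i => X (σ i) ω) ⁻¹' S = B j := by
      ext ω
      simp only [Set.mem_preimage, hSdef, Set.mem_setOf_eq, hBdef]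
      have hr : rankF n (Fin.last n) (fun i => X (σ i) ω) = rankF n (σ (Fin.last n)) (Y ω) := by
        rw [rankF_eq_sum, rankF_eq_sum]
        exact Equiv.sum_comp σ (fun i => if X i ω ≤ X (σ (Fin.last n)) ω then 1 else 0)
      rw [hr, hσ, Equiv.swap_apply_right]
    have h4 : Y ⁻¹' S = B (Fin.last n) := rfl
    rw [h3, h4] at h2
    exact h2
  -- the tie-free set
  set T : Set Ω := {ω | Function.Injective (fun i => X i ω)} with hTdef
  have hT : MeasurableSet T := by
    have hTeq : T = ⋂ i, ⋂ j, {ω | X i ω = X j ω → i = j} := by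
      ext ω
      simp only [hTdef, Set.mem_setOf_eq, Set.mem_iInter, Function.Injective]
    rw [hTeq]
    refine MeasurableSet.iInter fun i => MeasurableSet.iInter fun j => ?_
    by_cases hij : i = j
    · subst hij
      have : {ω | X i ω = X i ω → i = i} = Set.univ := by ext ω; simp
      rw [this]; exact MeasurableSet.univ
    · have : {ω | X i ω = X j ω → i = j} = {ω | X i ω = X j ω}ᶜ := by
        ext ω; simp [hij]
      rw [this]
      exact (measurableSet_eq_fun (hmeas i) (hmeas j)).compl
  have hTc : ℙ Tᶜ = 0 := by
    rw [measure_compl hT (measure_ne_top _ _), hties]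
    simp
  have hae : ∀ᵐ ω ∂(ℙ : Measure Ω), ω ∈ T := by
    rw [ae_iff]
    simpa [Set.compl_def] using hTc
  -- sum of probabilities is k
  have hsum : ∑ j : Fin (n+1), ℙ (B j) = (k : ℝ≥0∞) := by
    have h1 : ∀ j : Fin (n+1), ℙ (B j)
        = ∫⁻ ω, Set.indicator (B j) (fun _ => (1:ℝ≥0∞)) ω ∂ℙ := by
      intro j
      exact (lintegral_indicator_one (hB j)).symm
    rw [Finset.sum_congr rfl (fun j _ => h1 j), ← lintegral_finset_sum]
    · have h2 : ∀ᵐ ω ∂(ℙ : Measure Ω),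
          (∑ j : Fin (n+1), Set.indicator (B j) (fun _ => (1:ℝ≥0∞)) ω) = (k:ℝ≥0∞) := by
        filter_upwards [hae] with ω hω
        have hx : Function.Injective (fun i => X i ω) := hω
        have h3 : ∀ j : Fin (n+1), Set.indicator (B j) (fun _ => (1:ℝ≥0∞)) ω
            = if rankF n j (Y ω) ≤ k then 1 else 0 := by
          intro j
          rw [Set.indicator_apply]
          congr 1
        rw [Finset.sum_congr rfl (fun j _ => h3 j), Finset.sum_boole]
        have h4 : (Finset.univ.filter (fun j => rankF n j (Y ω) ≤ k)).card = k :=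
          card_rankF_le hx (by omega)
        rw [h4]
      rw [lintegral_congr_ae h2, lintegral_const]
      simp
    · intro j _
      exact measurable_const.indicator (hB j)
  have hlast : ((n:ℝ≥0∞)+1) * ℙ (B (Fin.last n)) = (k : ℝ≥0∞) := by
    rw [← hsum, Finset.sum_congr rfl (fun j _ => hBeq j), Finset.sum_const, Finset.card_univ]
    simp [nsmul_eq_mul]
  have hnpos : (0:ℝ) < (n:ℝ)+1 := by positivity
  have hBlastR : (ℙ (B (Fin.last n))).toReal = (k:ℝ) / ((n:ℝ)+1) := by
    have h5 := congrArg ENNReal.toReal hlast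
    rw [ENNReal.toReal_mul] at h5
    have h6 : ((n:ℝ≥0∞)+1).toReal = (n:ℝ)+1 := by
      rw [ENNReal.toReal_add (by simp) (by simp)]
      simp
    rw [h6] at h5
    rw [ENNReal.toReal_natCast] at h5
    field_simp
    linarith [h5]
  -- inclusion of the event
  have hsub : {ω | X (Fin.last n) ω ≤
      kthSmallest (Multiset.map (fun i : Fin n => X i.castSucc ω) Finset.univ.val) k}
      ⊆ B (Fin.last n) ∪ Tᶜ := by
    intro ω hω
    by_cases hωT : ω ∈ T
    · left
      exact rank_last_le hk1 hk (fun i => X i ω) hωT hω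
    · right; exact hωT
  have hle : ℙ {ω | X (Fin.last n) ω ≤
      kthSmallest (Multiset.map (fun i : Fin n => X i.castSucc ω) Finset.univ.val) k}
      ≤ ℙ (B (Fin.last n)) := by
    refine (measure_mono hsub).trans ?_
    refine (measure_union_le _ _).trans ?_
    rw [hTc, add_zero]
  have h8 : (ℙ {ω | X (Fin.last n) ω ≤
      kthSmallest (Multiset.map (fun i : Fin n => X i.castSucc ω) Finset.univ.val) k}).toReal
      ≤ (ℙ (B (Fin.last n))).toReal := ENNReal.toReal_mono (measure_ne_top _ _) hle
  rw [hBlastR] at h8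
  refine h8.trans ?_
  have hceil : (k:ℝ) < ((n:ℝ)+1)*(1-α) + 1 := by
    rw [hkdef]
    exact Nat.ceil_lt_add_one (by nlinarith)
  rw [div_le_iff₀ hnpos]
  have hinv : (1/((n:ℝ)+1))*((n:ℝ)+1) = 1 := by field_simp
  nlinarith [hceil, hinv]
end

section
/- If $X_1,\dots,X_{n+1}$ are exchangeable real-valued random variables with almost surely no ties, then the rank of $X_{n+1}$ among $X_1,\dots,X_{n+1}$ is uniformly distributed on $\{1,2,\dots,n+1\}$. -/
open MeasureTheory ProbabilityTheory

private noncomputable def rnk {n : ℕ} (y : Fin (n + 1) → ℝ) (k : Fin (n + 1)) : ℕ :=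
  (Finset.univ.filter (fun i => y i ≤ y k)).card

private lemma rnk_inj {n : ℕ} {y : Fin (n + 1) → ℝ} (hy : Function.Injective y) :
    Function.Injective (rnk y) := by
  have key : ∀ a b : Fin (n + 1), y a < y b → rnk y a < rnk y b := by
    intro a b hab
    apply Finset.card_lt_card
    constructor
    · intro i hi
      simp only [Finset.mem_filter, Finset.mem_univ, true_and] at *
      exact hi.trans hab.le
    · intro hsub
      have hb : b ∈ Finset.univ.filter (fun i => y i ≤ y b) := by simp
      have := hsub hb
      simp only [Finset.mem_filter] at this
      exact absurd this.2 (not_le.mpr hab)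
  intro a b hab
  rcases lt_trichotomy (y a) (y b) with h | h | h
  · exact absurd hab (key a b h).ne
  · exact hy h
  · exact absurd hab (key b a h).ne'

private lemma rnk_surj {n : ℕ} {y : Fin (n + 1) → ℝ} (hy : Function.Injective y)
    {r : ℕ} (h1 : 1 ≤ r) (h2 : r ≤ n + 1) : ∃ k, rnk y k = r := by
  have hsub : (Finset.univ.image (rnk y)) ⊆ Finset.Icc 1 (n + 1) := by
    intro m hm
    simp only [Finset.mem_image] at hm
    obtain ⟨k, -, rfl⟩ := hm
    rw [Finset.mem_Icc]
    refine ⟨Finset.card_pos.mpr ⟨k, by simp⟩, ?_⟩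
    exact (Finset.card_filter_le _ _).trans (by simp)
  have hcard : (Finset.univ.image (rnk y)).card = n + 1 := by
    rw [Finset.card_image_of_injective _ (rnk_inj hy)]; simp
  have heq : Finset.univ.image (rnk y) = Finset.Icc 1 (n + 1) :=
    Finset.eq_of_subset_of_card_le hsub (by rw [Nat.card_Icc, hcard]; omega)
  have hr : r ∈ Finset.univ.image (rnk y) := by
    rw [heq]; exact Finset.mem_Icc.mpr ⟨h1, h2⟩
  simpa using hr

private lemma rnk_meas {n : ℕ} (k : Fin (n + 1)) :
    Measurable (fun y : Fin (n + 1) → ℝ => rnk y k) := by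
  have h : (fun y : Fin (n + 1) → ℝ => rnk y k)
      = fun y => ∑ i, if y i ≤ y k then 1 else 0 := by
    funext y; unfold rnk; rw [Finset.card_filter]
  rw [h]
  exact Finset.measurable_sum _ fun i _ =>
    Measurable.ite (measurableSet_le (measurable_pi_apply i) (measurable_pi_apply k))
      measurable_const measurable_const

private lemma rnk_comp {n : ℕ} (y : Fin (n + 1) → ℝ) (σ : Equiv.Perm (Fin (n + 1)))
    (k : Fin (n + 1)) : rnk (fun i => y (σ i)) k = rnk y (σ k) := by
  unfold rnk
  exact Finset.card_equiv σ (fun i => by simp)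

/-- Rank uniformity for exchangeable, a.s. tie-free random variables: the rank
of `X (Fin.last n)` among `X 0, …, X n` (the number of indices `i` with
`X i ≤ X (Fin.last n)`) is uniform on `{1, …, n+1}`. -/
theorem rank_uniform_of_exchangeable
    {Ω : Type*} [MeasureSpace Ω] [IsProbabilityMeasure (ℙ : Measure Ω)]
    {n : ℕ} (X : Fin (n + 1) → Ω → ℝ) (hmeas : ∀ i, Measurable (X i))
    (hexch : ∀ σ : Equiv.Perm (Fin (n + 1)),
      Measure.map (fun ω => fun i => X (σ i) ω) ℙ
        = Measure.map (fun ω => fun i => X i ω) ℙ)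
    (hties : ℙ {ω | Function.Injective (fun i => X i ω)} = 1) :
    ∀ r : ℕ, 1 ≤ r → r ≤ n + 1 →
      ℙ {ω | (Finset.univ.filter
          (fun i : Fin (n + 1) => X i ω ≤ X (Fin.last n) ω)).card = r}
        = 1 / ((n : ENNReal) + 1) := by
  intro r h1 h2
  set Φ : Ω → (Fin (n + 1) → ℝ) := fun ω i => X i ω with hΦ
  have hΦm : Measurable Φ := measurable_pi_lambda _ fun i => hmeas i
  set μ : Measure (Fin (n + 1) → ℝ) := Measure.map Φ ℙ with hμ
  have hprob : IsProbabilityMeasure μ := Measure.isProbabilityMeasure_map hΦm.aemeasurable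
  set S : Fin (n + 1) → Set (Fin (n + 1) → ℝ) := fun k => {y | rnk y k = r} with hS
  have hSm : ∀ k, MeasurableSet (S k) := fun k =>
    (rnk_meas k) (measurableSet_singleton r)
  set T : Set (Fin (n + 1) → ℝ) := {y | Function.Injective y} with hT
  have hTm : MeasurableSet T := by
    have : T = ⋂ i, ⋂ j, {y : Fin (n + 1) → ℝ | y i = y j → i = j} := by
      ext y
      simp only [hT, Set.mem_setOf_eq, Set.mem_iInter, Function.Injective]
    rw [this]
    refine MeasurableSet.iInter fun i => MeasurableSet.iInter fun j => ?_
    by_cases hij : i = j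
    · simp [hij]
    · have : {y : Fin (n + 1) → ℝ | y i = y j → i = j}
          = {y : Fin (n + 1) → ℝ | y i = y j}ᶜ := by
        ext y; simp [hij]
      rw [this]
      exact (measurableSet_eq_fun (measurable_pi_apply i) (measurable_pi_apply j)).compl
  have hTμ : μ T = 1 := by
    rw [hμ, Measure.map_apply hΦm hTm]
    exact hties
  have hTc : μ Tᶜ = 0 := by
    rw [measure_compl hTm (by simp [hTμ]), hTμ, measure_univ]; simp
  -- all S k have the same measure
  have hsame : ∀ k, μ (S k) = μ (S (Fin.last n)) := by
    intro k
    set σ : Equiv.Perm (Fin (n + 1)) := Equiv.swap k (Fin.last n) with hσ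
    have hg : Measurable (fun y : Fin (n + 1) → ℝ => fun i => y (σ i)) :=
      measurable_pi_lambda _ fun i => measurable_pi_apply (σ i)
    have hcomp : (fun ω => fun i => X (σ i) ω)
        = (fun y : Fin (n + 1) → ℝ => fun i => y (σ i)) ∘ Φ := rfl
    have hmap : Measure.map (fun y : Fin (n + 1) → ℝ => fun i => y (σ i)) μ = μ := by
      rw [hμ, Measure.map_map hg hΦm]
      exact hexch σ
    have : μ (S (Fin.last n)) =
        μ ((fun y : Fin (n + 1) → ℝ => fun i => y (σ i)) ⁻¹' (S (Fin.last n))) := by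
      conv_lhs => rw [← hmap]
      rw [Measure.map_apply hg (hSm _)]
    rw [this]
    congr 1
    ext y
    simp only [Set.mem_preimage, hS, Set.mem_setOf_eq]
    rw [rnk_comp y σ (Fin.last n), hσ, Equiv.swap_apply_right]
  -- the sets S k ∩ T partition T
  have hdisj : Pairwise (Function.onFun Disjoint (fun k => S k ∩ T)) := by
    intro a b hab
    refine Set.disjoint_left.mpr fun y ⟨ha, hy⟩ ⟨hb, _⟩ => ?_
    exact hab (rnk_inj hy (ha.trans hb.symm))
  have hunion : (⋃ k, S k ∩ T) = T := by
    ext y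
    constructor
    · rintro ⟨_, ⟨k, rfl⟩, _, hy⟩; exact hy
    · intro hy
      obtain ⟨k, hk⟩ := rnk_surj hy h1 h2
      exact Set.mem_iUnion.mpr ⟨k, hk, hy⟩
  have hsum : ∑ k : Fin (n + 1), μ (S k ∩ T) = 1 := by
    rw [← tsum_fintype (L := SummationFilter.unconditional _), ← measure_iUnion hdisj (fun k => (hSm k).inter hTm), hunion, hTμ]
  have hinter : ∀ k, μ (S k ∩ T) = μ (S k) := by
    intro k
    have h := measure_inter_add_diff (S k) hTm (μ := μ)
    have hz : μ (S k \ T) = 0 :=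
      measure_mono_null (Set.diff_subset_compl _ _) hTc
    rw [hz, add_zero] at h
    exact h
  have hkey : ((n : ENNReal) + 1) * μ (S (Fin.last n)) = 1 := by
    calc ((n : ENNReal) + 1) * μ (S (Fin.last n))
        = ∑ _k : Fin (n + 1), μ (S (Fin.last n)) := by
          rw [Finset.sum_const, Finset.card_univ, Fintype.card_fin, nsmul_eq_mul]
          push_cast; ring
      _ = ∑ k : Fin (n + 1), μ (S k ∩ T) := by
          refine Finset.sum_congr rfl fun k _ => ?_
          rw [hinter k, hsame k]
      _ = 1 := hsum
  have hfin : μ (S (Fin.last n)) = 1 / ((n : ENNReal) + 1) := by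
    rw [ENNReal.eq_div_iff (by simp) (by simp)]
    exact hkey
  have : ℙ {ω | (Finset.univ.filter
      (fun i : Fin (n + 1) => X i ω ≤ X (Fin.last n) ω)).card = r}
      = μ (S (Fin.last n)) := by
    rw [hμ, Measure.map_apply hΦm (hSm _)]
    rfl
  rw [this, hfin]
end
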